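/- arXiv:2407.17248 — 2 statements merged into one kernel-verified Lean document; each statement's English description precedes it below -/
import Mathlib

section
/- Let δ ∈ (0,1), q ≥ 1, T > 0, and let g : (0,T) → [0,∞) be bounded and measurable. Then for all t ∈ (0,T), ∫₀ᵗ e^{-δ(t-s)} (∫₀ˢ e^{-(s-σ)} g(σ) dσ)^q ds ≤ (1/(1-δ)) ∫₀ᵗ e^{-δ(t-s)} g(s)^q ds. -/
open MeasureTheory Real Set

private lemma integrableOn_Ioc_of_bound {f : ℝ → ℝ} {a b : ℝ} (C : ℝ) (hf : Measurable f)
    (hC : ∀ x ∈ Set.Ioc a b, |f x| ≤ C) : IntegrableOn f (Set.Ioc a b) := by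
  refine Integrable.mono' (g := fun _ => C)
    (integrableOn_const measure_Ioc_lt_top.ne) hf.aestronglyMeasurable.restrict ?_
  exact (ae_restrict_iff' measurableSet_Ioc).2 (Filter.Eventually.of_forall fun x hx => by
    simpa [Real.norm_eq_abs] using hC x hx)

private lemma integral_exp_sub (s : ℝ) :
    ∫ σ in (0:ℝ)..s, Real.exp (σ - s) = 1 - Real.exp (-s) := by
  have h : ∀ x ∈ uIcc (0:ℝ) s,
      HasDerivAt (fun σ => Real.exp (σ - s)) (Real.exp (x - s)) x := by
    intro x _
    simpa using ((hasDerivAt_id x).sub_const s).exp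
  rw [intervalIntegral.integral_eq_sub_of_hasDerivAt h
    ((Real.continuous_exp.comp (continuous_id.sub continuous_const)).intervalIntegrable _ _)]
  simp

private lemma integral_kernel (δ t σ : ℝ) (hδ : δ ≠ 1) :
    ∫ s in σ..t, Real.exp (-δ * (t - s) - (s - σ)) =
      (Real.exp (-δ * (t - σ)) - Real.exp (-(t - σ))) / (1 - δ) := by
  have hcont : Continuous fun s => Real.exp (-δ * (t - s) - (s - σ)) :=
    Real.continuous_exp.comp (((continuous_const.mul (continuous_const.sub continuous_id)).sub
      (continuous_id.sub continuous_const)))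
  have h : ∀ x ∈ uIcc σ t,
      HasDerivAt (fun s => Real.exp (-δ * (t - s) - (s - σ)) / (δ - 1))
        (Real.exp (-δ * (t - x) - (x - σ))) x := by
    intro x _
    have h1 : HasDerivAt (fun s : ℝ => -δ * (t - s) - (s - σ)) (δ - 1) x := by
      have := (((hasDerivAt_const x t).sub (hasDerivAt_id x)).const_mul (-δ)).sub
        ((hasDerivAt_id x).sub_const σ)
      exact this.congr_deriv (by ring)
    have h2 := (h1.exp).div_const (δ - 1)
    exact h2.congr_deriv (by rw [mul_div_assoc, div_self (sub_ne_zero.2 hδ), mul_one])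
  rw [intervalIntegral.integral_eq_sub_of_hasDerivAt h (hcont.intervalIntegrable _ _)]
  have e1 : -δ * (t - t) - (t - σ) = -(t - σ) := by ring
  have e2 : -δ * (t - σ) - (σ - σ) = -δ * (t - σ) := by ring
  rw [e1, e2]
  have h1 : δ - 1 ≠ 0 := sub_ne_zero.2 hδ
  have h2 : (1:ℝ) - δ ≠ 0 := sub_ne_zero.2 (fun h => hδ h.symm)
  field_simp
  ring

private lemma jensen_step (q s M : ℝ) (hq : 1 ≤ q) (hs : 0 < s) (g : ℝ → ℝ)
    (hg : Measurable g) (hg0 : ∀ x, 0 ≤ g x) (hgb : ∀ x, g x ≤ M) :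
    (∫ σ in Set.Ioc 0 s, Real.exp (σ - s) * g σ) ^ q
      ≤ ∫ σ in Set.Ioc 0 s, Real.exp (σ - s) * g σ ^ q := by
  have hM : 0 ≤ M := le_trans (hg0 0) (hgb 0)
  have hq0 : 0 ≤ q := le_trans zero_le_one hq
  have hqne : q ≠ 0 := by positivity
  have hker : Continuous fun σ : ℝ => Real.exp (σ - s) :=
    Real.continuous_exp.comp (continuous_id.sub continuous_const)
  have hGmeas : Measurable fun x => g x ^ q :=
    (Real.continuous_rpow_const hq0).measurable.comp hg
  have int1 : IntegrableOn (fun σ => Real.exp (σ - s) * g σ) (Set.Ioc 0 s) volume := by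
    refine integrableOn_Ioc_of_bound M (hker.measurable.mul hg) fun x hx => ?_
    rw [abs_of_nonneg (mul_nonneg (Real.exp_nonneg _) (hg0 x))]
    calc Real.exp (x - s) * g x ≤ 1 * M :=
          mul_le_mul (Real.exp_le_one_iff.2 (by linarith [hx.2])) (hgb x) (hg0 x) zero_le_one
      _ = M := one_mul M
  have int2 : IntegrableOn (fun σ => Real.exp (σ - s) * g σ ^ q) (Set.Ioc 0 s) volume := by
    refine integrableOn_Ioc_of_bound (M ^ q) (hker.measurable.mul hGmeas) fun x hx => ?_
    rw [abs_of_nonneg (mul_nonneg (Real.exp_nonneg _) (Real.rpow_nonneg (hg0 x) q))]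
    calc Real.exp (x - s) * g x ^ q ≤ 1 * M ^ q :=
          mul_le_mul (Real.exp_le_one_iff.2 (by linarith [hx.2]))
            (Real.rpow_le_rpow (hg0 x) (hgb x) hq0) (Real.rpow_nonneg (hg0 x) q) zero_le_one
      _ = M ^ q := one_mul _
  have hJ0 : 0 ≤ ∫ σ in Set.Ioc 0 s, Real.exp (σ - s) * g σ :=
    setIntegral_nonneg measurableSet_Ioc fun x _ => mul_nonneg (Real.exp_nonneg _) (hg0 x)
  have hJ'0 : 0 ≤ ∫ σ in Set.Ioc 0 s, Real.exp (σ - s) * g σ ^ q :=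
    setIntegral_nonneg measurableSet_Ioc fun x _ =>
      mul_nonneg (Real.exp_nonneg _) (Real.rpow_nonneg (hg0 x) q)
  rcases eq_or_lt_of_le hq with hq1 | hq1
  · subst hq1
    simp [Real.rpow_one]
  -- Hölder's inequality route
  set p := Real.conjExponent q with hp
  have hpq : p.HolderConjugate q := (Real.HolderConjugate.conjExponent hq1).symm
  have hp0 : 0 < p := hpq.pos
  have hinv : 1 / p + 1 / q = 1 := by
    rw [one_div, one_div]; exact hpq.inv_add_inv_eq_one
  have hkm : Measurable fun σ => ENNReal.ofReal (Real.exp (σ - s)) :=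
    ENNReal.measurable_ofReal.comp hker.measurable
  have hA : AEMeasurable (fun σ => (ENNReal.ofReal (Real.exp (σ - s))) ^ (1 / p))
      (volume.restrict (Set.Ioc (0:ℝ) s)) :=
    (ENNReal.continuous_rpow_const.measurable.comp hkm).aemeasurable
  have hB : AEMeasurable
      (fun σ => (ENNReal.ofReal (Real.exp (σ - s))) ^ (1 / q) * ENNReal.ofReal (g σ))
      (volume.restrict (Set.Ioc (0:ℝ) s)) :=
    ((ENNReal.continuous_rpow_const.measurable.comp hkm).mul
      (ENNReal.measurable_ofReal.comp hg)).aemeasurable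
  have hmass : (∫⁻ σ in Set.Ioc (0:ℝ) s, ENNReal.ofReal (Real.exp (σ - s))) ≤ 1 := by
    rw [← ofReal_integral_eq_lintegral_ofReal hker.integrableOn_Ioc
      (Filter.Eventually.of_forall fun x => Real.exp_nonneg _)]
    rw [← intervalIntegral.integral_of_le hs.le, integral_exp_sub]
    exact ENNReal.ofReal_le_one.2 (by linarith [Real.exp_nonneg (-s)])
  have key : ENNReal.ofReal (∫ σ in Set.Ioc 0 s, Real.exp (σ - s) * g σ)
      ≤ (ENNReal.ofReal (∫ σ in Set.Ioc 0 s, Real.exp (σ - s) * g σ ^ q)) ^ (1 / q) := by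
    calc ENNReal.ofReal (∫ σ in Set.Ioc 0 s, Real.exp (σ - s) * g σ)
        = ∫⁻ σ in Set.Ioc (0:ℝ) s, ENNReal.ofReal (Real.exp (σ - s) * g σ) :=
          ofReal_integral_eq_lintegral_ofReal int1
            (Filter.Eventually.of_forall fun x => mul_nonneg (Real.exp_nonneg _) (hg0 x))
      _ = ∫⁻ σ in Set.Ioc (0:ℝ) s,
            ((fun σ => (ENNReal.ofReal (Real.exp (σ - s))) ^ (1 / p)) *
             (fun σ => (ENNReal.ofReal (Real.exp (σ - s))) ^ (1 / q) * ENNReal.ofReal (g σ))) σ := by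
          refine lintegral_congr fun σ => ?_
          simp only [Pi.mul_apply]
          rw [← mul_assoc, ← ENNReal.rpow_add _ _ (ENNReal.ofReal_pos.2 (Real.exp_pos _)).ne'
            ENNReal.ofReal_ne_top, hinv, ENNReal.rpow_one, ENNReal.ofReal_mul (Real.exp_nonneg _)]
      _ ≤ (∫⁻ σ in Set.Ioc (0:ℝ) s, ((ENNReal.ofReal (Real.exp (σ - s))) ^ (1 / p)) ^ p) ^ (1 / p) *
          (∫⁻ σ in Set.Ioc (0:ℝ) s,
            ((ENNReal.ofReal (Real.exp (σ - s))) ^ (1 / q) * ENNReal.ofReal (g σ)) ^ q) ^ (1 / q) :=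
          ENNReal.lintegral_mul_le_Lp_mul_Lq _ hpq hA hB
      _ ≤ 1 * (ENNReal.ofReal (∫ σ in Set.Ioc 0 s, Real.exp (σ - s) * g σ ^ q)) ^ (1 / q) := by
          have heq1 : (∫⁻ σ in Set.Ioc (0:ℝ) s, ((ENNReal.ofReal (Real.exp (σ - s))) ^ (1 / p)) ^ p)
              = ∫⁻ σ in Set.Ioc (0:ℝ) s, ENNReal.ofReal (Real.exp (σ - s)) := by
            refine lintegral_congr fun σ => ?_
            rw [← ENNReal.rpow_mul, one_div_mul_cancel hp0.ne', ENNReal.rpow_one]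
          have hfac1 : (∫⁻ σ in Set.Ioc (0:ℝ) s,
              ((ENNReal.ofReal (Real.exp (σ - s))) ^ (1 / p)) ^ p) ^ (1 / p) ≤ 1 := by
            rw [heq1]
            exact le_trans (ENNReal.rpow_le_rpow hmass (by positivity))
              (le_of_eq (ENNReal.one_rpow _))
          have hfac2 : (∫⁻ σ in Set.Ioc (0:ℝ) s,
              ((ENNReal.ofReal (Real.exp (σ - s))) ^ (1 / q) * ENNReal.ofReal (g σ)) ^ q)
              = ENNReal.ofReal (∫ σ in Set.Ioc 0 s, Real.exp (σ - s) * g σ ^ q) := by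
            rw [ofReal_integral_eq_lintegral_ofReal int2
              (Filter.Eventually.of_forall fun x =>
                mul_nonneg (Real.exp_nonneg _) (Real.rpow_nonneg (hg0 x) q))]
            refine lintegral_congr fun σ => ?_
            rw [ENNReal.mul_rpow_of_nonneg _ _ hq0, ← ENNReal.rpow_mul,
              one_div_mul_cancel hqne, ENNReal.rpow_one,
              ENNReal.ofReal_rpow_of_nonneg (hg0 σ) hq0,
              ← ENNReal.ofReal_mul (Real.exp_nonneg _)]
          rw [hfac2]
          exact mul_le_mul' hfac1 le_rfl
      _ = (ENNReal.ofReal (∫ σ in Set.Ioc 0 s, Real.exp (σ - s) * g σ ^ q)) ^ (1 / q) := one_mul _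
  have final : ENNReal.ofReal ((∫ σ in Set.Ioc 0 s, Real.exp (σ - s) * g σ) ^ q)
      ≤ ENNReal.ofReal (∫ σ in Set.Ioc 0 s, Real.exp (σ - s) * g σ ^ q) := by
    rw [← ENNReal.ofReal_rpow_of_nonneg hJ0 hq0]
    calc (ENNReal.ofReal (∫ σ in Set.Ioc 0 s, Real.exp (σ - s) * g σ)) ^ q
        ≤ ((ENNReal.ofReal (∫ σ in Set.Ioc 0 s, Real.exp (σ - s) * g σ ^ q)) ^ (1 / q)) ^ q :=
          ENNReal.rpow_le_rpow key hq0
      _ = ENNReal.ofReal (∫ σ in Set.Ioc 0 s, Real.exp (σ - s) * g σ ^ q) := by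
          rw [← ENNReal.rpow_mul, one_div_mul_cancel hqne, ENNReal.rpow_one]
  exact (ENNReal.ofReal_le_ofReal_iff hJ'0).1 final

private lemma aux (δ q t M : ℝ) (hδ0 : 0 < δ) (hδ1 : δ < 1) (hq : 1 ≤ q) (ht : 0 < t)
    (g : ℝ → ℝ) (hg : Measurable g) (hg0 : ∀ x, 0 ≤ g x) (hgb : ∀ x, g x ≤ M) :
    (∫ s in (0:ℝ)..t, Real.exp (-δ * (t - s)) *
        (∫ σ in (0:ℝ)..s, Real.exp (-(s - σ)) * g σ) ^ q)
      ≤ (1 / (1 - δ)) * ∫ s in (0:ℝ)..t, Real.exp (-δ * (t - s)) * g s ^ q := by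
  have hM : 0 ≤ M := le_trans (hg0 0) (hgb 0)
  have hq0 : 0 ≤ q := le_trans zero_le_one hq
  have h1δ : (0:ℝ) < 1 - δ := by linarith
  set G : ℝ → ℝ := fun x => g x ^ q with hG
  have hGmeas : Measurable G := (Real.continuous_rpow_const hq0).measurable.comp hg
  have hG0 : ∀ x, 0 ≤ G x := fun x => Real.rpow_nonneg (hg0 x) q
  have hGb : ∀ x, G x ≤ M ^ q := fun x => Real.rpow_le_rpow (hg0 x) (hgb x) hq0
  have hMq : 0 ≤ M ^ q := Real.rpow_nonneg hM q
  simp only [neg_sub]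
  -- primitives
  set P : ℝ → ℝ := fun s => ∫ σ in (0:ℝ)..s, Real.exp σ * g σ with hPdef
  set P' : ℝ → ℝ := fun s => ∫ σ in (0:ℝ)..s, Real.exp σ * G σ with hP'def
  have hexpg_int : ∀ a b : ℝ, IntervalIntegrable (fun σ => Real.exp σ * g σ) volume a b := by
    intro a b
    rw [intervalIntegrable_iff]
    refine Integrable.mono' (g := fun _ => Real.exp (max a b) * M) ?_
      ((Real.continuous_exp.measurable.mul hg).aestronglyMeasurable.restrict) ?_
    · refine integrableOn_const ?_
      rw [Set.uIoc]
      exact measure_Ioc_lt_top.ne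
    · refine (ae_restrict_iff' measurableSet_uIoc).2 (Filter.Eventually.of_forall fun x hx => ?_)
      rw [Real.norm_eq_abs, abs_of_nonneg (mul_nonneg (Real.exp_nonneg _) (hg0 x))]
      exact mul_le_mul (Real.exp_le_exp.2 hx.2) (hgb x) (hg0 x) (Real.exp_nonneg _)
  have hexpG_int : ∀ a b : ℝ, IntervalIntegrable (fun σ => Real.exp σ * G σ) volume a b := by
    intro a b
    rw [intervalIntegrable_iff]
    refine Integrable.mono' (g := fun _ => Real.exp (max a b) * M ^ q) ?_
      ((Real.continuous_exp.measurable.mul hGmeas).aestronglyMeasurable.restrict) ?_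
    · refine integrableOn_const ?_
      rw [Set.uIoc]
      exact measure_Ioc_lt_top.ne
    · refine (ae_restrict_iff' measurableSet_uIoc).2 (Filter.Eventually.of_forall fun x hx => ?_)
      rw [Real.norm_eq_abs, abs_of_nonneg (mul_nonneg (Real.exp_nonneg _) (hG0 x))]
      exact mul_le_mul (Real.exp_le_exp.2 hx.2) (hGb x) (hG0 x) (Real.exp_nonneg _)
  have hPc : Continuous P := intervalIntegral.continuous_primitive hexpg_int 0
  have hP'c : Continuous P' := intervalIntegral.continuous_primitive hexpG_int 0
  have hJrw : ∀ s : ℝ, (∫ σ in (0:ℝ)..s, Real.exp (σ - s) * g σ) = Real.exp (-s) * P s := by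
    intro s
    rw [hPdef, ← intervalIntegral.integral_const_mul]
    refine intervalIntegral.integral_congr fun σ _ => ?_
    have : Real.exp (σ - s) = Real.exp (-s) * Real.exp σ := by
      rw [← Real.exp_add]; ring_nf
    rw [this]; ring
  have hQrw : ∀ s : ℝ, (∫ σ in (0:ℝ)..s, Real.exp (σ - s) * G σ) = Real.exp (-s) * P' s := by
    intro s
    rw [hP'def, ← intervalIntegral.integral_const_mul]
    refine intervalIntegral.integral_congr fun σ _ => ?_
    have : Real.exp (σ - s) = Real.exp (-s) * Real.exp σ := by
      rw [← Real.exp_add]; ring_nf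
    rw [this]; ring
  rw [intervalIntegral.integral_of_le ht.le, intervalIntegral.integral_of_le ht.le]
  simp only [hJrw]
  -- Step 1 : Jensen
  have contL : Continuous fun s => Real.exp (-δ * (t - s)) * (Real.exp (-s) * P s) ^ q :=
    (Real.continuous_exp.comp (continuous_const.mul (continuous_const.sub continuous_id))).mul
      ((Real.continuous_rpow_const hq0).comp
        ((Real.continuous_exp.comp continuous_neg).mul hPc))
  have contM : Continuous fun s => Real.exp (-δ * (t - s)) * (Real.exp (-s) * P' s) :=
    (Real.continuous_exp.comp (continuous_const.mul (continuous_const.sub continuous_id))).mul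
      ((Real.continuous_exp.comp continuous_neg).mul hP'c)
  have step1 : (∫ s in Set.Ioc (0:ℝ) t, Real.exp (-δ * (t - s)) * (Real.exp (-s) * P s) ^ q)
      ≤ ∫ s in Set.Ioc (0:ℝ) t, Real.exp (-δ * (t - s)) * (Real.exp (-s) * P' s) := by
    refine setIntegral_mono_on contL.integrableOn_Ioc contM.integrableOn_Ioc
      measurableSet_Ioc fun s hs => ?_
    refine mul_le_mul_of_nonneg_left ?_ (Real.exp_nonneg _)
    rw [← hJrw s, ← hQrw s, intervalIntegral.integral_of_le hs.1.le,
      intervalIntegral.integral_of_le hs.1.le]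
    exact jensen_step q s M hq hs.1 g hg hg0 hgb
  -- Step 2 : Fubini
  set F : ℝ → ℝ → ℝ := fun s σ =>
    if σ ≤ s then Real.exp (-δ * (t - s)) * (Real.exp (σ - s) * G σ) else 0 with hF
  haveI hfin : IsFiniteMeasure (volume.restrict (Set.Ioc (0:ℝ) t)) :=
    ⟨by rw [Measure.restrict_apply_univ]; exact measure_Ioc_lt_top⟩
  have hFmeas : Measurable (Function.uncurry F) := by
    refine Measurable.ite (measurableSet_le measurable_snd measurable_fst) ?_ measurable_const
    exact ((Real.continuous_exp.comp
        (continuous_const.mul (continuous_const.sub continuous_fst))).measurable).mul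
      (((Real.continuous_exp.comp (continuous_snd.sub continuous_fst)).measurable).mul
        (hGmeas.comp measurable_snd))
  have hFbound : ∀ p ∈ (Set.Ioc (0:ℝ) t) ×ˢ (Set.Ioc (0:ℝ) t),
      ‖Function.uncurry F p‖ ≤ M ^ q := by
    rintro ⟨s, σ⟩ ⟨hs, hσ⟩
    by_cases h : σ ≤ s
    · simp only [Function.uncurry, hF, if_pos h]
      rw [Real.norm_eq_abs,
        abs_of_nonneg (mul_nonneg (Real.exp_nonneg _) (mul_nonneg (Real.exp_nonneg _) (hG0 σ)))]
      calc Real.exp (-δ * (t - s)) * (Real.exp (σ - s) * G σ)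
          ≤ 1 * (1 * M ^ q) := by
            refine mul_le_mul (Real.exp_le_one_iff.2 (by nlinarith [hs.2])) ?_
              (mul_nonneg (Real.exp_nonneg _) (hG0 σ)) zero_le_one
            exact mul_le_mul (Real.exp_le_one_iff.2 (by linarith)) (hGb σ) (hG0 σ) zero_le_one
        _ = M ^ q := by ring
    · simp only [Function.uncurry, hF, if_neg h]
      simpa using hMq
  have hFint : Integrable (Function.uncurry F)
      ((volume.restrict (Set.Ioc (0:ℝ) t)).prod (volume.restrict (Set.Ioc (0:ℝ) t))) := by
    refine Integrable.mono' (integrable_const (M ^ q)) hFmeas.aestronglyMeasurable ?_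
    rw [Measure.prod_restrict, ae_restrict_iff' (measurableSet_Ioc.prod measurableSet_Ioc)]
    exact Filter.Eventually.of_forall hFbound
  have step2a : ∀ s ∈ Set.Ioc (0:ℝ) t,
      Real.exp (-δ * (t - s)) * (Real.exp (-s) * P' s)
        = ∫ σ in Set.Ioc (0:ℝ) t, F s σ := by
    intro s hs
    have hind : ∀ σ, F s σ =
        (Set.Iic s).indicator (fun σ => Real.exp (-δ * (t - s)) * (Real.exp (σ - s) * G σ)) σ := by
      intro σ
      simp [hF, Set.indicator_apply, Set.mem_Iic]
    symm
    calc ∫ σ in Set.Ioc (0:ℝ) t, F s σ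
        = ∫ σ in Set.Ioc (0:ℝ) t,
            (Set.Iic s).indicator
              (fun σ => Real.exp (-δ * (t - s)) * (Real.exp (σ - s) * G σ)) σ := by
          exact setIntegral_congr_fun measurableSet_Ioc fun σ _ => hind σ
      _ = ∫ σ in Set.Ioc (0:ℝ) t ∩ Set.Iic s,
            Real.exp (-δ * (t - s)) * (Real.exp (σ - s) * G σ) :=
          setIntegral_indicator measurableSet_Iic
      _ = ∫ σ in Set.Ioc (0:ℝ) s,
            Real.exp (-δ * (t - s)) * (Real.exp (σ - s) * G σ) := by
          rw [Set.Ioc_inter_Iic, min_eq_right hs.2]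
      _ = Real.exp (-δ * (t - s)) * ∫ σ in Set.Ioc (0:ℝ) s, Real.exp (σ - s) * G σ :=
          integral_const_mul _ _
      _ = Real.exp (-δ * (t - s)) * (Real.exp (-s) * P' s) := by
          rw [← intervalIntegral.integral_of_le hs.1.le, hQrw s]
  have step2c : ∀ σ ∈ Set.Ioc (0:ℝ) t,
      (∫ s in Set.Ioc (0:ℝ) t, F s σ)
        = G σ * ((Real.exp (-δ * (t - σ)) - Real.exp (-(t - σ))) / (1 - δ)) := by
    intro σ hσ
    have hind : ∀ s, F s σ =
        (Set.Ici σ).indicator (fun s => Real.exp (-δ * (t - s)) * (Real.exp (σ - s) * G σ)) s := by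
      intro s
      simp [hF, Set.indicator_apply, Set.mem_Ici]
    have hset : Set.Ioc (0:ℝ) t ∩ Set.Ici σ = Set.Icc σ t := by
      ext x
      simp only [Set.mem_inter_iff, Set.mem_Ioc, Set.mem_Ici, Set.mem_Icc]
      constructor
      · rintro ⟨⟨_, h2⟩, h3⟩; exact ⟨h3, h2⟩
      · rintro ⟨h1, h2⟩; exact ⟨⟨lt_of_lt_of_le hσ.1 h1, h2⟩, h1⟩
    calc ∫ s in Set.Ioc (0:ℝ) t, F s σ
        = ∫ s in Set.Ioc (0:ℝ) t,
            (Set.Ici σ).indicator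
              (fun s => Real.exp (-δ * (t - s)) * (Real.exp (σ - s) * G σ)) s :=
          setIntegral_congr_fun measurableSet_Ioc fun s _ => hind s
      _ = ∫ s in Set.Ioc (0:ℝ) t ∩ Set.Ici σ,
            Real.exp (-δ * (t - s)) * (Real.exp (σ - s) * G σ) :=
          setIntegral_indicator measurableSet_Ici
      _ = ∫ s in Set.Ioc σ t, Real.exp (-δ * (t - s)) * (Real.exp (σ - s) * G σ) := by
          rw [hset, integral_Icc_eq_integral_Ioc]
      _ = ∫ s in Set.Ioc σ t, G σ * Real.exp (-δ * (t - s) - (s - σ)) := by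
          refine setIntegral_congr_fun measurableSet_Ioc fun s _ => ?_
          rw [show -δ * (t - s) - (s - σ) = -δ * (t - s) + (σ - s) by ring, Real.exp_add]
          ring
      _ = G σ * ∫ s in Set.Ioc σ t, Real.exp (-δ * (t - s) - (s - σ)) := integral_const_mul _ _
      _ = G σ * ((Real.exp (-δ * (t - σ)) - Real.exp (-(t - σ))) / (1 - δ)) := by
          rw [← intervalIntegral.integral_of_le hσ.2, integral_kernel δ t σ (ne_of_lt hδ1)]
  have step2 : (∫ s in Set.Ioc (0:ℝ) t, Real.exp (-δ * (t - s)) * (Real.exp (-s) * P' s))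
      = ∫ σ in Set.Ioc (0:ℝ) t,
          G σ * ((Real.exp (-δ * (t - σ)) - Real.exp (-(t - σ))) / (1 - δ)) := by
    calc (∫ s in Set.Ioc (0:ℝ) t, Real.exp (-δ * (t - s)) * (Real.exp (-s) * P' s))
        = ∫ s in Set.Ioc (0:ℝ) t, ∫ σ in Set.Ioc (0:ℝ) t, F s σ :=
          setIntegral_congr_fun measurableSet_Ioc fun s hs => step2a s hs
      _ = ∫ σ in Set.Ioc (0:ℝ) t, ∫ s in Set.Ioc (0:ℝ) t, F s σ :=
          integral_integral_swap hFint
      _ = ∫ σ in Set.Ioc (0:ℝ) t,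
            G σ * ((Real.exp (-δ * (t - σ)) - Real.exp (-(t - σ))) / (1 - δ)) :=
          setIntegral_congr_fun measurableSet_Ioc fun σ hσ => step2c σ hσ
  -- Step 3 : final bound
  have hKb : ∀ σ ∈ Set.Ioc (0:ℝ) t,
      |(Real.exp (-δ * (t - σ)) - Real.exp (-(t - σ))) / (1 - δ)| ≤ 1 / (1 - δ) := by
    intro σ hσ
    have h1 : Real.exp (-(t - σ)) ≤ Real.exp (-δ * (t - σ)) :=
      Real.exp_le_exp.2 (by nlinarith [hσ.2])
    have h2 : Real.exp (-δ * (t - σ)) ≤ 1 :=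
      Real.exp_le_one_iff.2 (by nlinarith [hσ.2])
    rw [abs_of_nonneg (div_nonneg (by linarith) h1δ.le)]
    exact (div_le_div_iff_of_pos_right h1δ).2 (by linarith [Real.exp_nonneg (-(t - σ))])
  have intC : IntegrableOn
      (fun σ => G σ * ((Real.exp (-δ * (t - σ)) - Real.exp (-(t - σ))) / (1 - δ)))
      (Set.Ioc (0:ℝ) t) volume := by
    refine integrableOn_Ioc_of_bound (M ^ q * (1 / (1 - δ)))
      (hGmeas.mul (by fun_prop)) fun x hx => ?_
    rw [abs_mul, abs_of_nonneg (hG0 x)]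
    exact mul_le_mul (hGb x) (hKb x hx) (abs_nonneg _) hMq
  have intD : IntegrableOn
      (fun σ => (1 / (1 - δ)) * (Real.exp (-δ * (t - σ)) * G σ)) (Set.Ioc (0:ℝ) t) volume := by
    refine integrableOn_Ioc_of_bound ((1 / (1 - δ)) * M ^ q)
      ((measurable_const.mul ((by fun_prop : Measurable fun σ : ℝ =>
        Real.exp (-δ * (t - σ))).mul hGmeas))) fun x hx => ?_
    rw [abs_of_nonneg (mul_nonneg (by positivity) (mul_nonneg (Real.exp_nonneg _) (hG0 x)))]
    refine mul_le_mul_of_nonneg_left ?_ (by positivity)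
    calc Real.exp (-δ * (t - x)) * G x ≤ 1 * M ^ q :=
          mul_le_mul (Real.exp_le_one_iff.2 (by nlinarith [hx.2])) (hGb x) (hG0 x) zero_le_one
      _ = M ^ q := one_mul _
  have step3 : (∫ σ in Set.Ioc (0:ℝ) t,
        G σ * ((Real.exp (-δ * (t - σ)) - Real.exp (-(t - σ))) / (1 - δ)))
      ≤ ∫ σ in Set.Ioc (0:ℝ) t, (1 / (1 - δ)) * (Real.exp (-δ * (t - σ)) * G σ) := by
    refine setIntegral_mono_on intC intD measurableSet_Ioc fun σ hσ => ?_
    have heq : (1 / (1 - δ)) * (Real.exp (-δ * (t - σ)) * G σ)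
        = G σ * (Real.exp (-δ * (t - σ)) / (1 - δ)) := by ring
    rw [heq]
    exact mul_le_mul_of_nonneg_left
      ((div_le_div_iff_of_pos_right h1δ).2 (by linarith [Real.exp_nonneg (-(t - σ))])) (hG0 σ)
  calc (∫ s in Set.Ioc (0:ℝ) t, Real.exp (-δ * (t - s)) * (Real.exp (-s) * P s) ^ q)
      ≤ ∫ s in Set.Ioc (0:ℝ) t, Real.exp (-δ * (t - s)) * (Real.exp (-s) * P' s) := step1
    _ = ∫ σ in Set.Ioc (0:ℝ) t,
          G σ * ((Real.exp (-δ * (t - σ)) - Real.exp (-(t - σ))) / (1 - δ)) := step2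
    _ ≤ ∫ σ in Set.Ioc (0:ℝ) t, (1 / (1 - δ)) * (Real.exp (-δ * (t - σ)) * G σ) := step3
    _ = (1 / (1 - δ)) * ∫ σ in Set.Ioc (0:ℝ) t, Real.exp (-δ * (t - σ)) * G σ :=
        integral_const_mul _ _

theorem stmt_0 (δ q T : ℝ) (hδ0 : 0 < δ) (hδ1 : δ < 1) (hq : 1 ≤ q) (hT : 0 < T)
    (g : ℝ → ℝ) (hg : Measurable g) (hg0 : ∀ x ∈ Set.Ioo 0 T, 0 ≤ g x)
    (hgb : ∃ M : ℝ, ∀ x ∈ Set.Ioo 0 T, g x ≤ M) :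
    ∀ t ∈ Set.Ioo 0 T,
      (∫ s in (0:ℝ)..t, Real.exp (-δ * (t - s)) *
          (∫ σ in (0:ℝ)..s, Real.exp (-(s - σ)) * g σ) ^ q)
        ≤ (1 / (1 - δ)) * ∫ s in (0:ℝ)..t, Real.exp (-δ * (t - s)) * g s ^ q := by
  intro t ht
  obtain ⟨M, hM⟩ := hgb
  set g' : ℝ → ℝ := (Set.Ioo 0 T).indicator g with hg'def
  have hg'meas : Measurable g' := hg.indicator measurableSet_Ioo
  have hg'0 : ∀ x, 0 ≤ g' x := fun x => Set.indicator_nonneg (fun a ha => hg0 a ha) x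
  have hg'b : ∀ x, g' x ≤ max M 0 := by
    intro x
    by_cases hx : x ∈ Set.Ioo 0 T
    · rw [hg'def, Set.indicator_of_mem hx]
      exact le_trans (hM x hx) (le_max_left _ _)
    · rw [hg'def, Set.indicator_of_notMem hx]
      exact le_max_right _ _
  have key := aux δ q t (max M 0) hδ0 hδ1 hq ht.1 g' hg'meas hg'0 hg'b
  have hmem : ∀ x ∈ Set.Ioc (0:ℝ) t, x ∈ Set.Ioo (0:ℝ) T :=
    fun x hx => ⟨hx.1, lt_of_le_of_lt hx.2 ht.2⟩
  have hgg' : ∀ x ∈ Set.Ioc (0:ℝ) t, g' x = g x :=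
    fun x hx => Set.indicator_of_mem (hmem x hx) g
  have hinner : ∀ s ∈ Set.Ioc (0:ℝ) t,
      (∫ σ in (0:ℝ)..s, Real.exp (-(s - σ)) * g σ)
        = ∫ σ in (0:ℝ)..s, Real.exp (-(s - σ)) * g' σ := by
    intro s hs
    rw [intervalIntegral.integral_of_le hs.1.le, intervalIntegral.integral_of_le hs.1.le]
    refine setIntegral_congr_fun measurableSet_Ioc fun σ hσ => ?_
    rw [hgg' σ ⟨hσ.1, le_trans hσ.2 hs.2⟩]
  have hL : (∫ s in (0:ℝ)..t, Real.exp (-δ * (t - s)) *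
      (∫ σ in (0:ℝ)..s, Real.exp (-(s - σ)) * g σ) ^ q)
      = ∫ s in (0:ℝ)..t, Real.exp (-δ * (t - s)) *
      (∫ σ in (0:ℝ)..s, Real.exp (-(s - σ)) * g' σ) ^ q := by
    rw [intervalIntegral.integral_of_le ht.1.le, intervalIntegral.integral_of_le ht.1.le]
    refine setIntegral_congr_fun measurableSet_Ioc fun s hs => ?_
    rw [hinner s hs]
  have hR : (∫ s in (0:ℝ)..t, Real.exp (-δ * (t - s)) * g s ^ q)
      = ∫ s in (0:ℝ)..t, Real.exp (-δ * (t - s)) * g' s ^ q := by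
    rw [intervalIntegral.integral_of_le ht.1.le, intervalIntegral.integral_of_le ht.1.le]
    refine setIntegral_congr_fun measurableSet_Ioc fun s hs => ?_
    rw [hgg' s hs]
  rw [hL, hR]
  exact key
end

section
/- Let n ∈ {1,2,3}, α, τ, θ', p be real numbers with the constraints of Lemma 3.1 (in particular τ > 1, θ' > 1, 0 < α - 1/τ < 2/n - 1/θ', 1/θ' < 2/n, p > 1 and 2 - n + np > 0). Define λ ∈ (0,2), b ∈ (0,1) as in Lemma 3.1 and η₃ := (n·(2/(2-λ))·(α-1))/(2 - n + np). If additionally α < 1 + 2/n - 1/θ' and p is chosen larger than (2/n - 1/θ')/(1-b) + 1 - 2/n, then η₃ ∈ (0,1). -/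
theorem stmt_16 (n : ℕ) (hn : 1 ≤ n) (hn3 : n ≤ 3) (α τ θ' p : ℝ)
    (hα : 1 < α) (hτ : 1 < τ) (hθ' : 1 < θ')
    (h1 : 0 < α - 1 / τ) (h2 : α - 1 / τ < 2 / (n : ℝ) - 1 / θ')
    (h3 : 1 / θ' < 2 / (n : ℝ)) (hp : 1 < p) (hnp : 0 < 2 - (n : ℝ) + (n : ℝ) * p)
    (a : ℝ) (ha : a = ((n : ℝ) * p / 2 - ((n : ℝ) / 2) * (1 - 1 / θ')) /
      (1 - (n : ℝ) / 2 + (n : ℝ) * p / 2))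
    (lam : ℝ) (hlam : lam = 2 * a) (hlam2 : lam ∈ Set.Ioo (0 : ℝ) 2)
    (b : ℝ) (hb : b = ((n : ℝ) - (n : ℝ) / θ') / (2 - (n : ℝ) / τ + (n : ℝ)))
    (hb01 : b ∈ Set.Ioo (0 : ℝ) 1)
    (hαθ : α < 1 + 2 / (n : ℝ) - 1 / θ')
    (hplarge : (2 / (n : ℝ) - 1 / θ') / (1 - b) + 1 - 2 / (n : ℝ) < p) :
    ((n : ℝ) * (2 / (2 - lam)) * (α - 1)) / (2 - (n : ℝ) + (n : ℝ) * p)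
      ∈ Set.Ioo (0 : ℝ) 1 := by
  have hn0 : (0:ℝ) < n := by exact_mod_cast hn
  have hθ0 : (0:ℝ) < θ' := by linarith
  have h2θ : (n:ℝ) < 2 * θ' := by
    have := (div_lt_div_iff₀ hθ0 hn0).mp h3
    linarith
  have hD : (0:ℝ) < 1 - (n:ℝ)/2 + (n:ℝ)*p/2 := by linarith
  have hDne : (1 - (n:ℝ)/2 + (n:ℝ)*p/2) ≠ 0 := ne_of_gt hD
  have hθne : θ' ≠ 0 := ne_of_gt hθ0
  have h2θne : (2*θ' - (n:ℝ)) ≠ 0 := by linarith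
  have key : ((n : ℝ) * (2 / (2 - lam)) * (α - 1)) / (2 - (n : ℝ) + (n : ℝ) * p)
      = (n:ℝ) * θ' * (α - 1) / (2*θ' - n) := by
    have h2lam : 2 - lam = (2 - (n:ℝ)/θ') / (1 - (n:ℝ)/2 + (n:ℝ)*p/2) := by
      rw [hlam, ha]; field_simp; ring
    rw [h2lam]
    have hnum : (0:ℝ) < 2 - (n:ℝ)/θ' := by
      have : (n:ℝ)/θ' < 2 := by rw [div_lt_iff₀ hθ0]; linarith
      linarith
    rw [div_div_eq_mul_div]
    field_simp
  rw [key]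
  constructor
  · apply div_pos
    · have := mul_pos (mul_pos hn0 hθ0) (by linarith : (0:ℝ) < α - 1)
      linarith [this]
    · linarith
  · rw [div_lt_one (by linarith : (0:ℝ) < 2*θ' - n)]
    have hα1 : α - 1 < 2/(n:ℝ) - 1/θ' := by linarith
    have h2 : (n:ℝ) * θ' * (α - 1) < (n:ℝ) * θ' * (2/(n:ℝ) - 1/θ') := by
      apply mul_lt_mul_of_pos_left hα1 (mul_pos hn0 hθ0)
    have h3' : (n:ℝ) * θ' * (2/(n:ℝ) - 1/θ') = 2*θ' - n := by
      field_simp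
    linarith
end
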